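/- Let Y₁₂, x₁, x₂, X₁₁, X₁₂ ∈ ℝ with X₁₁ > 0, Y₁₂·X₁₁ ≥ x₁², and 0 ≤ X₁₂ ≤ x₁, and for α₂ ∈ ℝ let V(α₂) := [[Y₁₂, x₁, x₂−α₂], [x₁, X₁₁, X₁₂], [x₂−α₂, X₁₂, x₂−α₂]]. Then det V(α₂) = −X₁₁(x₂−α₂)² + (2X₁₂x₁ + Y₁₂X₁₁ − x₁²)(x₂−α₂) − Y₁₂X₁₂², and det V(α₂) ≥ 0 if and only if α₂⁻ ≤ α₂ ≤ α₂⁺. Moreover α₂⁻ ≤ x₂ − X₁₂x₁/X₁₁ − θ/X₁₁ and α₂⁺ ≥ x₂ − X₁₂x₁/X₁₁. -/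
import Mathlib


open Matrix


/-- α₂⁻ = x₂ − X₁₂x₁/X₁₁ − (θ + √Δ)/(2X₁₁), where θ = Y₁₂X₁₁ − x₁² and
Δ = θ(θ + 4X₁₂(x₁ − X₁₂)). -/
noncomputable def alpha2minus (x1 x2 X11 X12 Y12 : ℝ) : ℝ :=
  x2 - X12 * x1 / X11 -
    ((Y12 * X11 - x1 ^ 2) +
      Real.sqrt ((Y12 * X11 - x1 ^ 2) *
        ((Y12 * X11 - x1 ^ 2) + 4 * X12 * (x1 - X12)))) / (2 * X11)

/-- α₂⁺ = x₂ − X₁₂x₁/X₁₁ − (θ − √Δ)/(2X₁₁), where θ = Y₁₂X₁₁ − x₁² and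
Δ = θ(θ + 4X₁₂(x₁ − X₁₂)). -/
noncomputable def alpha2plus (x1 x2 X11 X12 Y12 : ℝ) : ℝ :=
  x2 - X12 * x1 / X11 -
    ((Y12 * X11 - x1 ^ 2) -
      Real.sqrt ((Y12 * X11 - x1 ^ 2) *
        ((Y12 * X11 - x1 ^ 2) + 4 * X12 * (x1 - X12)))) / (2 * X11)

/-- Determinant formula and sign characterization for
V(α₂) = [[Y₁₂, x₁, x₂−α₂],[x₁, X₁₁, X₁₂],[x₂−α₂, X₁₂, x₂−α₂]], together with
the bounds α₂⁻ ≤ x₂ − X₁₂x₁/X₁₁ − θ/X₁₁ and α₂⁺ ≥ x₂ − X₁₂x₁/X₁₁. -/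
theorem stmt8 (Y12 x1 x2 X11 X12 : ℝ) (hX : 0 < X11)
    (hth : x1 ^ 2 ≤ Y12 * X11) (h0 : 0 ≤ X12) (hx : X12 ≤ x1) :
    (∀ a2 : ℝ,
      (!![Y12, x1, x2 - a2;
          x1, X11, X12;
          x2 - a2, X12, x2 - a2] : Matrix (Fin 3) (Fin 3) ℝ).det =
        -X11 * (x2 - a2) ^ 2 + (2 * X12 * x1 + Y12 * X11 - x1 ^ 2) * (x2 - a2)
          - Y12 * X12 ^ 2) ∧
    (∀ a2 : ℝ,
      0 ≤ (!![Y12, x1, x2 - a2;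
              x1, X11, X12;
              x2 - a2, X12, x2 - a2] : Matrix (Fin 3) (Fin 3) ℝ).det ↔
        alpha2minus x1 x2 X11 X12 Y12 ≤ a2 ∧ a2 ≤ alpha2plus x1 x2 X11 X12 Y12) ∧
    alpha2minus x1 x2 X11 X12 Y12 ≤
      x2 - X12 * x1 / X11 - (Y12 * X11 - x1 ^ 2) / X11 ∧
    x2 - X12 * x1 / X11 ≤ alpha2plus x1 x2 X11 X12 Y12 := by
  have hX' : X11 ≠ 0 := hX.ne'
  have hθ : (0:ℝ) ≤ Y12 * X11 - x1 ^ 2 := by linarith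
  have hΔ : (0:ℝ) ≤ (Y12 * X11 - x1 ^ 2) * ((Y12 * X11 - x1 ^ 2) + 4 * X12 * (x1 - X12)) := by
    have : (0:ℝ) ≤ 4 * X12 * (x1 - X12) := mul_nonneg (by positivity) (by linarith)
    exact mul_nonneg hθ (by linarith)
  have hs := Real.sq_sqrt hΔ
  have hsnn := Real.sqrt_nonneg ((Y12 * X11 - x1 ^ 2) * ((Y12 * X11 - x1 ^ 2) + 4 * X12 * (x1 - X12)))
  set s := Real.sqrt ((Y12 * X11 - x1 ^ 2) * ((Y12 * X11 - x1 ^ 2) + 4 * X12 * (x1 - X12))) with hsdef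
  have hθs : Y12 * X11 - x1 ^ 2 ≤ s := by
    nlinarith [mul_nonneg hθ (mul_nonneg (by positivity : (0:ℝ) ≤ 4 * X12) (by linarith : (0:ℝ) ≤ x1 - X12))]
  have hdet : ∀ a2 : ℝ,
      (!![Y12, x1, x2 - a2;
          x1, X11, X12;
          x2 - a2, X12, x2 - a2] : Matrix (Fin 3) (Fin 3) ℝ).det =
        -X11 * (x2 - a2) ^ 2 + (2 * X12 * x1 + Y12 * X11 - x1 ^ 2) * (x2 - a2)
          - Y12 * X12 ^ 2 := by
    intro a2
    simp [Matrix.det_fin_three]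
    ring
  have key : ∀ a2 : ℝ,
      -X11 * (x2 - a2) ^ 2 + (2 * X12 * x1 + Y12 * X11 - x1 ^ 2) * (x2 - a2)
          - Y12 * X12 ^ 2 =
      X11 * (a2 - alpha2minus x1 x2 X11 X12 Y12) * (alpha2plus x1 x2 X11 X12 Y12 - a2) := by
    intro a2
    unfold alpha2minus alpha2plus
    rw [← hsdef]
    field_simp
    nlinarith [hs, sq_nonneg s]
  refine ⟨hdet, ?_, ?_, ?_⟩
  · intro a2
    rw [hdet a2, key a2]
    have hdiff : alpha2plus x1 x2 X11 X12 Y12 - alpha2minus x1 x2 X11 X12 Y12 = s / X11 := by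
      unfold alpha2minus alpha2plus
      rw [← hsdef]
      field_simp
      ring
    have hmp : alpha2minus x1 x2 X11 X12 Y12 ≤ alpha2plus x1 x2 X11 X12 Y12 := by
      have : 0 ≤ s / X11 := div_nonneg hsnn hX.le
      linarith
    constructor
    · intro h
      constructor
      · by_contra hc
        push_neg at hc
        have h1 : a2 - alpha2minus x1 x2 X11 X12 Y12 < 0 := by linarith
        have h2 : 0 < alpha2plus x1 x2 X11 X12 Y12 - a2 := by linarith
        nlinarith [mul_pos hX h2]
      · by_contra hc
        push_neg at hc
        have h1 : 0 < a2 - alpha2minus x1 x2 X11 X12 Y12 := by linarith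
        have h2 : alpha2plus x1 x2 X11 X12 Y12 - a2 < 0 := by linarith
        nlinarith [mul_pos hX h1]
    · rintro ⟨h1, h2⟩
      have := mul_nonneg (mul_nonneg hX.le (by linarith : (0:ℝ) ≤ a2 - alpha2minus x1 x2 X11 X12 Y12)) (by linarith : (0:ℝ) ≤ alpha2plus x1 x2 X11 X12 Y12 - a2)
      linarith [this]
  · unfold alpha2minus
    rw [← hsdef]
    have : (Y12 * X11 - x1 ^ 2) / X11 ≤ ((Y12 * X11 - x1 ^ 2) + s) / (2 * X11) := by
      rw [div_le_div_iff₀ hX (by linarith)]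
      nlinarith
    linarith
  · unfold alpha2plus
    rw [← hsdef]
    have : ((Y12 * X11 - x1 ^ 2) - s) / (2 * X11) ≤ 0 := by
      apply div_nonpos_of_nonpos_of_nonneg (by linarith) (by linarith)
    linarith
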